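/- arXiv:1909.04274 — 5 statements merged into one kernel-verified Lean document; each statement's English description precedes it below -/
import Mathlib

section
/- Let β = log₂(3/2) and let C ⊆ {0,1}^n be a subcube of codimension 1 or 2 (n ≥ 2). Then ∫ h_C^β dμ = 2 μ(C)(1 − μ(C)), i.e., the isoperimetric inequality ∫ h_A^β dμ ≥ 2μ(A)(1−μ(A)) holds with equality for subcubes of codimension 1 and 2. -/
open Finset

noncomputable def β : ℝ := Real.logb 2 (3/2)

def flipC {n : ℕ} (x : Fin n → Bool) (i : Fin n) : Fin n → Bool :=
  Function.update x i (!x i)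

def hbd {n : ℕ} (A : Finset (Fin n → Bool)) (x : Fin n → Bool) : ℕ :=
  if x ∈ A then (univ.filter (fun i => flipC x i ∉ A)).card else 0

/-- `C` is a subcube of codimension `k`: some `k` coordinates are fixed. -/
def IsSubcube {n : ℕ} (k : ℕ) (C : Finset (Fin n → Bool)) : Prop :=
  ∃ (I : Finset (Fin n)) (z : Fin n → Bool), I.card = k ∧
    C = univ.filter (fun x => ∀ i ∈ I, x i = z i)

/-! Every point of a subcube with fixed coordinate set `I` has exactly `#I` neighbours outside
it: flipping a fixed coordinate leaves the subcube, flipping a free one does not. Hence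
`∫ h_C^β dμ = μ(C) · #I^β` with `μ(C) = 2^(-#I)`. For `#I = 1` both sides are `1/2`; for `#I = 2`
the value `2^β = 3/2` makes the left side `3/8 = 2 · (1/4) · (3/4)`. -/

section Subcube

variable {n : ℕ} (I : Finset (Fin n)) (z : Fin n → Bool)

def subcube : Finset (Fin n → Bool) :=
  univ.filter fun x => ∀ i ∈ I, x i = z i

variable {I z}

@[simp]
theorem mem_subcube {x : Fin n → Bool} : x ∈ subcube I z ↔ ∀ i ∈ I, x i = z i := by
  simp [subcube]

theorem subcube_eq_piFinset :
    subcube I z = Fintype.piFinset fun i => if i ∈ I then {z i} else univ := by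
  ext x
  simp only [mem_subcube, Fintype.mem_piFinset]
  refine forall_congr' fun i => ?_
  split_ifs with hi <;> simp [hi]

variable (I z)

theorem card_subcube : #(subcube I z) = 2 ^ (n - #I) := by
  rw [subcube_eq_piFinset, Fintype.card_piFinset]
  simp only [apply_ite Finset.card, card_singleton, card_univ, Fintype.card_bool]
  rw [prod_ite, prod_const_one, one_mul, prod_const, filter_not, filter_mem_eq_inter,
    univ_inter, card_univ_sdiff, Fintype.card_fin]

theorem card_subcube_div : (#(subcube I z) : ℝ) / 2 ^ n = (2 ^ #I)⁻¹ := by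
  have hI : #I ≤ n := by simpa using card_le_univ I
  rw [card_subcube, Nat.cast_pow, Nat.cast_two, pow_sub₀ _ two_ne_zero hI]
  field_simp

variable {I z}

theorem flipC_mem_subcube_iff {x : Fin n → Bool} (hx : x ∈ subcube I z) (i : Fin n) :
    flipC x i ∈ subcube I z ↔ i ∉ I := by
  rw [mem_subcube] at hx ⊢
  constructor
  · intro h hi
    simpa [flipC, hx i hi] using h i hi
  · intro hi j hj
    rw [flipC, Function.update_of_ne (ne_of_mem_of_not_mem hj hi), hx j hj]

theorem hbd_subcube (x : Fin n → Bool) :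
    hbd (subcube I z) x = if x ∈ subcube I z then #I else 0 := by
  unfold hbd
  split_ifs with hx
  · congr 1
    ext i
    simp [flipC_mem_subcube_iff hx]
  · rfl

theorem sum_rpow_hbd_subcube {p : ℝ} (hp : p ≠ 0) :
    ∑ x, (hbd (subcube I z) x : ℝ) ^ p = #(subcube I z) * (#I : ℝ) ^ p := by
  simp only [hbd_subcube, apply_ite (fun m : ℕ => (m : ℝ) ^ p), Nat.cast_zero,
    Real.zero_rpow hp, sum_ite_mem, univ_inter, sum_const, nsmul_eq_mul]

end Subcube

theorem two_rpow_β : (2 : ℝ) ^ β = 3 / 2 :=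
  Real.rpow_logb two_pos (by norm_num) (by norm_num)

theorem iso_eq_subcube_general {n : ℕ} (k : ℕ) (hk : k = 1 ∨ k = 2)
    (C : Finset (Fin n → Bool)) (hC : IsSubcube k C) :
    (∑ x, (hbd C x : ℝ) ^ β) / 2 ^ n =
      2 * ((C.card : ℝ) / 2 ^ n) * (1 - (C.card : ℝ) / 2 ^ n) := by
  obtain ⟨I, z, rfl, rfl⟩ := hC
  have hβ : β ≠ 0 := (Real.logb_pos one_lt_two (by norm_num)).ne'
  rw [← subcube, sum_rpow_hbd_subcube hβ, mul_div_right_comm, card_subcube_div]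
  rcases hk with h | h <;> rw [h] <;> norm_num [two_rpow_β]

theorem iso_eq_subcube {n : ℕ} (hn : 2 ≤ n) (k : ℕ) (hk : k = 1 ∨ k = 2)
    (C : Finset (Fin n → Bool)) (hC : IsSubcube k C) :
    (∑ x, (hbd C x : ℝ) ^ β) / 2 ^ n =
      2 * ((C.card : ℝ) / 2 ^ n) * (1 - (C.card : ℝ) / 2 ^ n) :=
  iso_eq_subcube_general k hk C hC
end

section
/- Let β = log₂(3/2). Define g(x,y) = ((2x(1−x))^{1/β} + (x−y)^{1/β})^β − 2(x + y²) + (x+y)². Then g(x,y) ≥ 0 for all x, y ∈ [0,1] with x(2x−1) ≤ y ≤ x. -/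
noncomputable def g (x y : ℝ) : ℝ :=
  ((2*x*(1-x)) ^ (1/β) + (x-y) ^ (1/β)) ^ β - 2*(x + y^2) + (x+y)^2

open Real

lemma rpow_le_two_mul_sub_one {p u : ℝ} (hp : 1 ≤ p) (h32 : (3/2 : ℝ) ^ p ≤ 2)
    (hu1 : 1 ≤ u) (hu2 : u ≤ 3/2) : u ^ p ≤ 2 * u - 1 := by
  have hconv := (convexOn_rpow hp).2 (Set.mem_Ici.mpr zero_le_one)
    (Set.mem_Ici.mpr (by norm_num : (0:ℝ) ≤ 3/2))
    (by linarith : (0:ℝ) ≤ 3 - 2 * u) (by linarith : (0:ℝ) ≤ 2 * (u - 1)) (by ring)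
  simp only [smul_eq_mul, one_rpow] at hconv
  calc u ^ p = ((3 - 2 * u) * 1 + 2 * (u - 1) * (3/2)) ^ p := by ring_nf
    _ ≤ (3 - 2 * u) * 1 + 2 * (u - 1) * (3/2) ^ p := hconv
    _ ≤ 2 * u - 1 := by nlinarith

lemma le_two_of_three_half_rpow_le {p : ℝ} (h32 : (3/2 : ℝ) ^ p ≤ 2) : p ≤ 2 := by
  rw [← rpow_le_rpow_left_iff (by norm_num : (1:ℝ) < 3/2)]
  norm_num
  linarith

lemma one_add_sq_div_two_rpow_le {p t : ℝ} (hp : 1 ≤ p) (h32 : (3/2 : ℝ) ^ p ≤ 2)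
    (ht0 : 0 ≤ t) (ht1 : t ≤ 1) : (1 + t ^ 2 / 2) ^ p ≤ 1 + t ^ p := by
  have hchord := rpow_le_two_mul_sub_one hp h32 (u := 1 + t ^ 2 / 2)
    (le_add_of_nonneg_right (by positivity)) (by nlinarith)
  have hsq : t ^ (2:ℝ) ≤ t ^ p :=
    rpow_le_rpow_of_exponent_ge' ht0 ht1 (by linarith) (le_two_of_three_half_rpow_le h32)
  rw [rpow_two] at hsq
  linarith

lemma add_sq_rpow_le {p A B : ℝ} (hp : 1 ≤ p) (h32 : (3/2 : ℝ) ^ p ≤ 2)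
    (hB : 0 ≤ B) (hBA : B ≤ A) (hA : A ≤ 1/2) : (A + B ^ 2) ^ p ≤ A ^ p + B ^ p := by
  obtain hA0 | hApos := (hB.trans hBA).eq_or_lt
  · obtain rfl : B = 0 := le_antisymm (hA0 ▸ hBA) hB
    simp [← hA0, zero_rpow (by positivity : p ≠ 0)]
  set t := B / A
  have ht0 : 0 ≤ t := div_nonneg hB hApos.le
  have hBt : B = t * A := (div_mul_cancel₀ B hApos.ne').symm
  have htA : 1 + t ^ 2 * A ≤ 1 + t ^ 2 / 2 := by nlinarith [sq_nonneg t]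
  calc (A + B ^ 2) ^ p = A ^ p * (1 + t ^ 2 * A) ^ p := by
        rw [← mul_rpow hApos.le (by positivity), hBt]; ring_nf
    _ ≤ A ^ p * (1 + t ^ 2 / 2) ^ p := by gcongr
    _ ≤ A ^ p * (1 + t ^ p) :=
        mul_le_mul_of_nonneg_left
          (one_add_sq_div_two_rpow_le hp h32 ht0 ((div_le_one hApos).mpr hBA))
          (rpow_nonneg hApos.le p)
    _ = A ^ p + B ^ p := by rw [hBt, mul_rpow ht0 hApos.le]; ring

lemma add_sq_le_rpow_add_rpow_rpow_one_div {p A B : ℝ} (hp : 1 ≤ p)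
    (h32 : (3/2 : ℝ) ^ p ≤ 2) (hB : 0 ≤ B) (hBA : B ≤ A) (hA : A ≤ 1/2) :
    A + B ^ 2 ≤ (A ^ p + B ^ p) ^ (1 / p) := by
  have hAB : 0 ≤ A + B ^ 2 := add_nonneg (hB.trans hBA) (sq_nonneg B)
  calc A + B ^ 2 = ((A + B ^ 2) ^ p) ^ (1 / p) := by
        rw [one_div, rpow_rpow_inv hAB (by positivity)]
    _ ≤ (A ^ p + B ^ p) ^ (1 / p) :=
        rpow_le_rpow (rpow_nonneg hAB p) (add_sq_rpow_le hp h32 hB hBA hA) (by positivity)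

lemma one_div_β_eq_logb : 1 / β = logb (3/2) 2 := by
  rw [β, one_div, inv_logb]

lemma three_half_rpow_one_div_β : (3/2 : ℝ) ^ (1 / β) = 2 := by
  rw [one_div_β_eq_logb, rpow_logb (by norm_num) (by norm_num) (by norm_num)]

lemma one_le_one_div_β : 1 ≤ 1 / β := by
  rw [one_div_β_eq_logb, le_logb_iff_rpow_le (by norm_num) (by norm_num)]
  norm_num

theorem g_nonneg_general (x y : ℝ)
    (h1 : x*(2*x-1) ≤ y) (h2 : y ≤ x) : 0 ≤ g x y := by
  have hB : 0 ≤ x - y := by linarith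
  have hBA : x - y ≤ 2*x*(1-x) := by linarith
  have hA : 2*x*(1-x) ≤ 1/2 := by nlinarith [sq_nonneg (2*x-1)]
  have hroot := add_sq_le_rpow_add_rpow_rpow_one_div one_le_one_div_β
    three_half_rpow_one_div_β.le hB hBA hA
  rw [one_div_one_div] at hroot
  unfold g
  nlinarith

theorem g_nonneg (x y : ℝ) (hx : x ∈ Set.Icc (0:ℝ) 1) (hy : y ∈ Set.Icc (0:ℝ) 1)
    (h1 : x*(2*x-1) ≤ y) (h2 : y ≤ x) : 0 ≤ g x y :=
  g_nonneg_general x y h1 h2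
end

section
/- Let β = log₂(3/2). For fixed α ≥ 0 and z ≥ 0, the function γ ↦ ((α − γ)^{1/β} + z^{1/β})^β + γ is nondecreasing in γ on [0, α]. -/
lemma β_pos : 0 < β := Real.logb_pos one_lt_two (by norm_num)

lemma β_lt_one : β < 1 :=
  calc β < Real.logb 2 2 := Real.logb_lt_logb one_lt_two (by norm_num) (by norm_num)
    _ = 1 := Real.logb_self_eq_one one_lt_two

lemma Real.rpow_add_rpow_rpow_one_div_le_add {p a b c : ℝ} (hp : 1 ≤ p) (ha : 0 ≤ a) (hb : 0 ≤ b)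
    (hc : 0 ≤ c) : ((a + b) ^ p + c ^ p) ^ (1 / p) ≤ a + (b ^ p + c ^ p) ^ (1 / p) := by
  have hp0 : 0 < p := zero_lt_one.trans_le hp
  have minkowski := Real.Lp_add_le_of_nonneg (s := Finset.univ) (f := ![a, 0]) (g := ![b, c]) hp
    (by intro i _; fin_cases i <;> simp [ha]) (by intro i _; fin_cases i <;> simp [hb, hc])
  simp only [Fin.sum_univ_two, Matrix.cons_val_zero, Matrix.cons_val_one,
    add_zero, zero_add, Real.zero_rpow hp0.ne'] at minkowski
  rwa [← Real.rpow_mul ha, mul_one_div_cancel hp0.ne', Real.rpow_one] at minkowski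

lemma monotoneOn_rpow_sub_add_rpow_rpow_one_div_add {p : ℝ} (hp : 1 ≤ p) (α z : ℝ) (hz : 0 ≤ z) :
    MonotoneOn (fun γ : ℝ => ((α - γ) ^ p + z ^ p) ^ (1 / p) + γ) (Set.Iic α) := by
  intro x _ y (hy : y ≤ α) hxy
  have h := Real.rpow_add_rpow_rpow_one_div_le_add hp (sub_nonneg.2 hxy) (sub_nonneg.2 hy) hz
  rw [sub_add_sub_cancel'] at h
  linarith

theorem mono_in_gamma_general (α z : ℝ) (hz : 0 ≤ z) :
    MonotoneOn (fun γ : ℝ => ((α - γ) ^ (1/β) + z ^ (1/β)) ^ β + γ)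
      (Set.Icc 0 α) := by
  have hp : 1 ≤ 1 / β := by rw [le_div_iff₀ β_pos]; linarith [β_lt_one]
  have h := monotoneOn_rpow_sub_add_rpow_rpow_one_div_add hp α z hz
  rw [one_div_one_div] at h
  exact h.mono Set.Icc_subset_Iic_self

theorem mono_in_gamma (α z : ℝ) (hα : 0 ≤ α) (hz : 0 ≤ z) :
    MonotoneOn (fun γ : ℝ => ((α - γ) ^ (1/β) + z ^ (1/β)) ^ β + γ)
      (Set.Icc 0 α) :=
  mono_in_gamma_general α z hz
end

section
/- For any partition (A, B, W) of V = {0,1}^n there exists a partition (A′, B′, W′) of V such that |A′| = |A|, |B′| = |B|, |W′| = |W|; A′ is increasing and B′ is decreasing; and |∇_i(A′,B′)| ≤ |∇_i(A,B)| for every coordinate i ∈ [n]. -/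
/-!
Encode the partition as a labelling `ℓ : {0,1}ⁿ → Fin 3` with `B, W, A` the fibres of `0, 1, 2`.
Compressing `ℓ` along a coordinate `j` sorts every edge `{x, xʲ}`, putting the larger label on the
endpoint with `x j = true`. This permutes labels within each edge, so the class sizes are kept;
and on each square face spanned by coordinates `i` and `j`, sorting along `j` does not increase the
number of `i`-edges from `A` to `B` (a finite check on four labels). Since `max` and `min` are
monotone, compressing along `j` keeps the labelling monotone along every coordinate along which it
already was, so compressing once along each coordinate yields a monotone labelling, whose top fibre
is increasing and whose bottom fibre is decreasing.
-/

open Finset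

/-- `∇ᵢ(A,B)`: the number of pairs `(x, xⁱ)` with `x ∈ A` and `xⁱ ∈ B`. -/
def nablaI {n : ℕ} (i : Fin n) (A B : Finset (Fin n → Bool)) : ℕ :=
  (A.filter (fun x => flipC x i ∈ B)).card

def IncreasingSet {n : ℕ} (A : Finset (Fin n → Bool)) : Prop :=
  ∀ x ∈ A, ∀ y : Fin n → Bool, x ≤ y → y ∈ A

def DecreasingSet {n : ℕ} (A : Finset (Fin n → Bool)) : Prop :=
  ∀ x ∈ A, ∀ y : Fin n → Bool, y ≤ x → y ∈ A

namespace Shifting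

variable {n : ℕ}

lemma flipC_apply_self (x : Fin n → Bool) (i : Fin n) : flipC x i i = !x i := by
  simp [flipC]

lemma flipC_apply_of_ne (x : Fin n → Bool) {i j : Fin n} (h : j ≠ i) : flipC x i j = x j := by
  simp [flipC, h]

@[simp] lemma flipC_flipC (x : Fin n → Bool) (i : Fin n) : flipC (flipC x i) i = x := by
  simp [flipC]

lemma flipC_involutive (i : Fin n) : Function.Involutive (flipC · i) :=
  fun x => flipC_flipC x i

lemma flipC_comm (x : Fin n → Bool) {i j : Fin n} (h : i ≠ j) :
    flipC (flipC x i) j = flipC (flipC x j) i := by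
  simp only [flipC, Function.update_apply]
  grind

lemma sum_eq_sum_filter_add_flipC {M : Type*} [AddCommMonoid M] (i : Fin n)
    {s : Finset (Fin n → Bool)} (hs : ∀ x, flipC x i ∈ s ↔ x ∈ s) (f : (Fin n → Bool) → M) :
    ∑ x ∈ s, f x = ∑ x ∈ s with x i = true, (f x + f (flipC x i)) := by
  rw [sum_add_distrib, ← sum_filter_add_sum_filter_not s (fun x => x i = true)]
  congr 1
  refine sum_equiv (flipC_involutive i).toPerm (fun x => ?_) (fun x _ => by simp)
  simp [hs, flipC_apply_self]

lemma sum_univ_eq_sum_filter_add_flipC {M : Type*} [AddCommMonoid M] (i : Fin n)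
    (f : (Fin n → Bool) → M) :
    ∑ x, f x = ∑ x with x i = true, (f x + f (flipC x i)) :=
  sum_eq_sum_filter_add_flipC i (by simp) f

section Fiber

variable {α : Type*} [DecidableEq α] {ℓ : (Fin n → Bool) → α} {x : Fin n → Bool}

def fiber (ℓ : (Fin n → Bool) → α) (v : α) : Finset (Fin n → Bool) :=
  {x | ℓ x = v}

@[simp] lemma mem_fiber {v : α} : x ∈ fiber ℓ v ↔ ℓ x = v := by
  simp [fiber]

lemma disjoint_fiber (ℓ : (Fin n → Bool) → α) {a b : α} (h : a ≠ b) :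
    Disjoint (fiber ℓ a) (fiber ℓ b) :=
  disjoint_filter.2 fun _ _ ha hb => h (ha ▸ hb)

end Fiber

section Compress

variable {α : Type*} [LinearOrder α] {ℓ : (Fin n → Bool) → α} {x : Fin n → Bool} {i j : Fin n}

def compress (j : Fin n) (ℓ : (Fin n → Bool) → α) (x : Fin n → Bool) : α :=
  if x j = true then max (ℓ x) (ℓ (flipC x j)) else min (ℓ x) (ℓ (flipC x j))

lemma compress_of_true (h : x j = true) : compress j ℓ x = max (ℓ x) (ℓ (flipC x j)) := by
  simp [compress, h]

lemma compress_of_false (h : x j = false) : compress j ℓ x = min (ℓ x) (ℓ (flipC x j)) := by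
  simp [compress, h]

lemma compress_flipC_of_true (h : x j = true) :
    compress j ℓ (flipC x j) = min (ℓ x) (ℓ (flipC x j)) := by
  rw [compress_of_false (by simp [flipC_apply_self, h]), flipC_flipC, min_comm]

lemma card_fiber_compress [DecidableEq α] (j : Fin n) (ℓ : (Fin n → Bool) → α) (v : α) :
    #(fiber (compress j ℓ) v) = #(fiber ℓ v) := by
  simp only [fiber, card_filter]
  rw [sum_univ_eq_sum_filter_add_flipC j, sum_univ_eq_sum_filter_add_flipC j]
  refine sum_congr rfl fun x hx => ?_
  rw [compress_of_true (mem_filter.1 hx).2, compress_flipC_of_true (mem_filter.1 hx).2]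
  rcases le_total (ℓ x) (ℓ (flipC x j)) with h | h
  · simp [h, add_comm]
  · simp [h]

def MonotoneIn (j : Fin n) (ℓ : (Fin n → Bool) → α) : Prop :=
  ∀ x, x j = true → ℓ (flipC x j) ≤ ℓ x

lemma monotoneIn_compress (j : Fin n) (ℓ : (Fin n → Bool) → α) :
    MonotoneIn j (compress j ℓ) := fun x hx => by
  rw [compress_of_true hx, compress_flipC_of_true hx]
  exact min_le_max

lemma MonotoneIn.compress (h : MonotoneIn i ℓ) (j : Fin n) : MonotoneIn i (compress j ℓ) := by
  obtain rfl | hij := eq_or_ne i j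
  · exact monotoneIn_compress i ℓ
  intro x hx
  have hxj : flipC x i j = x j := flipC_apply_of_ne x hij.symm
  have h₁ : ℓ (flipC x i) ≤ ℓ x := h x hx
  have h₂ : ℓ (flipC (flipC x i) j) ≤ ℓ (flipC x j) := by
    rw [flipC_comm x hij]
    exact h _ (by rwa [flipC_apply_of_ne x hij])
  cases hb : x j
  · rw [compress_of_false hb, compress_of_false (hxj.trans hb)]
    exact min_le_min h₁ h₂
  · rw [compress_of_true hb, compress_of_true (hxj.trans hb)]
    exact max_le_max h₁ h₂

lemma monotone_of_forall_monotoneIn (h : ∀ i, MonotoneIn i ℓ) : Monotone ℓ := by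
  classical
  let := Fintype.toLocallyFiniteOrder (α := Fin n → Bool)
  refine (monotone_iff_forall_covBy ℓ).2 fun x y hxy => ?_
  obtain ⟨i, hi⟩ := Pi.exists_forall_antisymmRel_of_covBy hxy
  have hne : x i ≠ y i := fun he => hxy.ne <| funext fun k => by
    rcases eq_or_ne k i with rfl | hk
    · exact he
    · exact (hi k hk).eq
  obtain ⟨hxi, hyi⟩ : x i = false ∧ y i = true := by
    have := hxy.le i
    revert hne this; cases x i <;> cases y i <;> simp
  have hflip : flipC y i = x := funext fun k => by
    rcases eq_or_ne k i with rfl | hk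
    · simp [flipC_apply_self, hxi, hyi]
    · rw [flipC_apply_of_ne y hk]; exact ((hi k hk).eq).symm
  exact hflip ▸ h i y hyi

lemma card_fiber_foldr_compress [DecidableEq α] (l : List (Fin n)) (ℓ : (Fin n → Bool) → α)
    (v : α) : #(fiber (l.foldr compress ℓ) v) = #(fiber ℓ v) := by
  induction l with
  | nil => rfl
  | cons j l ih => rw [List.foldr_cons, card_fiber_compress, ih]

lemma monotoneIn_foldr_compress {l : List (Fin n)} (hi : i ∈ l) (ℓ : (Fin n → Bool) → α) :
    MonotoneIn i (l.foldr compress ℓ) := by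
  induction l with
  | nil => cases hi
  | cons j l ih =>
    rw [List.foldr_cons]
    rcases List.mem_cons.1 hi with rfl | hi
    · exact monotoneIn_compress i _
    · exact (ih hi).compress j

lemma increasingSet_fiber_top [OrderTop α] [DecidableEq α] (hℓ : Monotone ℓ) :
    IncreasingSet (fiber ℓ ⊤) := fun x hx y hxy => by
  rw [mem_fiber] at hx ⊢
  exact top_unique (hx ▸ hℓ hxy)

lemma decreasingSet_fiber_bot [OrderBot α] [DecidableEq α] (hℓ : Monotone ℓ) :
    DecreasingSet (fiber ℓ ⊥) := fun x hx y hxy => by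
  rw [mem_fiber] at hx ⊢
  exact bot_unique (hx ▸ hℓ hxy)

end Compress

def edge (a b : Fin 3) : ℕ := if a = 2 ∧ b = 0 then 1 else 0

lemma nablaI_fiber (i : Fin n) (ℓ : (Fin n → Bool) → Fin 3) :
    nablaI i (fiber ℓ 2) (fiber ℓ 0) = ∑ x, edge (ℓ x) (ℓ (flipC x i)) := by
  rw [nablaI, fiber, fiber, filter_filter, card_filter]
  simp [edge]

lemma nablaI_fiber_compress_self_le (i : Fin n) (ℓ : (Fin n → Bool) → Fin 3) :
    nablaI i (fiber (compress i ℓ) 2) (fiber (compress i ℓ) 0) ≤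
      nablaI i (fiber ℓ 2) (fiber ℓ 0) := by
  rw [nablaI_fiber, nablaI_fiber, sum_univ_eq_sum_filter_add_flipC i,
    sum_univ_eq_sum_filter_add_flipC i]
  refine sum_le_sum fun x hx => ?_
  have hxi := (mem_filter.1 hx).2
  simp only [flipC_flipC, compress_of_true hxi, compress_flipC_of_true hxi]
  have key : ∀ a b : Fin 3,
      edge (max a b) (min a b) + edge (min a b) (max a b) ≤ edge a b + edge b a := by
    decide
  exact key _ _

lemma nablaI_fiber_compress_le_of_ne {i j : Fin n} (hij : i ≠ j)
    (ℓ : (Fin n → Bool) → Fin 3) :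
    nablaI i (fiber (compress j ℓ) 2) (fiber (compress j ℓ) 0) ≤
      nablaI i (fiber ℓ 2) (fiber ℓ 0) := by
  have hs : ∀ x : Fin n → Bool,
      flipC x i ∈ ({x | x j = true} : Finset _) ↔ x ∈ ({x | x j = true} : Finset _) := by
    simp [flipC_apply_of_ne _ hij.symm]
  rw [nablaI_fiber, nablaI_fiber, sum_univ_eq_sum_filter_add_flipC j,
    sum_univ_eq_sum_filter_add_flipC j, sum_eq_sum_filter_add_flipC i hs,
    sum_eq_sum_filter_add_flipC i hs]
  refine sum_le_sum fun x hx => ?_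
  simp only [mem_filter, mem_univ, true_and] at hx
  obtain ⟨hxj, hxi⟩ := hx
  have hxij : flipC x i j = true := by rwa [flipC_apply_of_ne x hij.symm]
  simp only [flipC_flipC, flipC_comm (flipC x i) hij.symm, flipC_comm x hij.symm,
    compress_of_true hxj, compress_flipC_of_true hxj, compress_of_true hxij,
    compress_flipC_of_true hxij]
  -- `a, b, c, d` are the labels of `x, xʲ, xⁱ, xⁱʲ` on the face spanned by `i` and `j`.
  have key : ∀ a b c d : Fin 3,
      edge (max a b) (max c d) + edge (min a b) (min c d) +
          (edge (max c d) (max a b) + edge (min c d) (min a b)) ≤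
        edge a c + edge b d + (edge c a + edge d b) := by
    decide
  exact key _ _ _ _

lemma nablaI_fiber_compress_le (i j : Fin n) (ℓ : (Fin n → Bool) → Fin 3) :
    nablaI i (fiber (compress j ℓ) 2) (fiber (compress j ℓ) 0) ≤
      nablaI i (fiber ℓ 2) (fiber ℓ 0) := by
  rcases eq_or_ne i j with rfl | hij
  · exact nablaI_fiber_compress_self_le i ℓ
  · exact nablaI_fiber_compress_le_of_ne hij ℓ

lemma nablaI_fiber_foldr_compress_le (i : Fin n) (l : List (Fin n))
    (ℓ : (Fin n → Bool) → Fin 3) :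
    nablaI i (fiber (l.foldr compress ℓ) 2) (fiber (l.foldr compress ℓ) 0) ≤
      nablaI i (fiber ℓ 2) (fiber ℓ 0) := by
  induction l with
  | nil => rfl
  | cons j l ih => exact (nablaI_fiber_compress_le i j _).trans ih

lemma fiber_union_fiber_union_fiber (ℓ : (Fin n → Bool) → Fin 3) :
    fiber ℓ 2 ∪ fiber ℓ 0 ∪ fiber ℓ 1 = univ := by
  ext x
  simp only [mem_union, mem_fiber, mem_univ, iff_true]
  omega

section PartitionLabel

variable {A B W : Finset (Fin n → Bool)}

def partitionLabel (A B : Finset (Fin n → Bool)) (x : Fin n → Bool) : Fin 3 :=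
  if x ∈ A then 2 else if x ∈ B then 0 else 1

lemma fiber_partitionLabel_two : fiber (partitionLabel A B) 2 = A := by
  ext x
  simp only [mem_fiber, partitionLabel]
  split_ifs <;> simp_all

lemma fiber_partitionLabel_zero (hAB : Disjoint A B) : fiber (partitionLabel A B) 0 = B := by
  ext x
  simp only [mem_fiber, partitionLabel]
  split_ifs with hA hB
  · simp [disjoint_left.1 hAB hA]
  · simp [hB]
  · simp [hB]

lemma fiber_partitionLabel_one (hUnion : A ∪ B ∪ W = univ) (hAW : Disjoint A W)
    (hBW : Disjoint B W) : fiber (partitionLabel A B) 1 = W := by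
  ext x
  have hx : x ∈ A ∪ B ∪ W := hUnion ▸ mem_univ x
  simp only [mem_fiber, partitionLabel]
  split_ifs with hA hB
  · simp [disjoint_left.1 hAW hA]
  · simp [disjoint_left.1 hBW hB]
  · simpa [hA, hB] using hx

end PartitionLabel

end Shifting

open Shifting in
theorem shifting {n : ℕ} (A B W : Finset (Fin n → Bool))
    (hUnion : A ∪ B ∪ W = univ)
    (hAB : Disjoint A B) (hAW : Disjoint A W) (hBW : Disjoint B W) :
    ∃ A' B' W' : Finset (Fin n → Bool),
      A' ∪ B' ∪ W' = univ ∧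
      Disjoint A' B' ∧ Disjoint A' W' ∧ Disjoint B' W' ∧
      A'.card = A.card ∧ B'.card = B.card ∧ W'.card = W.card ∧
      IncreasingSet A' ∧ DecreasingSet B' ∧
      ∀ i : Fin n, nablaI i A' B' ≤ nablaI i A B := by
  set ℓ := partitionLabel A B
  set ℓ' := (List.finRange n).foldr compress ℓ
  have hmono : Monotone ℓ' :=
    monotone_of_forall_monotoneIn fun i => monotoneIn_foldr_compress (List.mem_finRange i) ℓ
  have hA : fiber ℓ 2 = A := fiber_partitionLabel_two
  have hB : fiber ℓ 0 = B := fiber_partitionLabel_zero hAB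
  have hW : fiber ℓ 1 = W := fiber_partitionLabel_one hUnion hAW hBW
  refine ⟨fiber ℓ' 2, fiber ℓ' 0, fiber ℓ' 1, fiber_union_fiber_union_fiber ℓ',
    disjoint_fiber ℓ' (by decide), disjoint_fiber ℓ' (by decide), disjoint_fiber ℓ' (by decide),
    ?_, ?_, ?_, increasingSet_fiber_top hmono, decreasingSet_fiber_bot hmono, fun i => ?_⟩
  · rw [← hA, card_fiber_foldr_compress]
  · rw [← hB, card_fiber_foldr_compress]
  · rw [← hW, card_fiber_foldr_compress]
  · rw [← hA, ← hB]
    exact nablaI_fiber_foldr_compress_le i _ ℓ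
end

section
/- Fix k ≥ 1 and ε > 0 small. Suppose A ⊆ {0,1}^n satisfies |A| = (1 ± ε)2^{n−k} and there is a k-subset I of coordinates with |∇A ∖ ∇_I A| ≤ ε|A|. Then there is a codimension-k subcube C with |A Δ C| = O(ε)|A|, where the implied constant depends only on k. -/
open Finset

/-- `|∇A ∖ ∇_I A|`: number of boundary pairs `(x, xⁱ)` of `A` with `i ∉ I`. -/
def nablaOutside {n : ℕ} (A : Finset (Fin n → Bool)) (I : Finset (Fin n)) : ℕ :=
  ∑ x ∈ A, ((univ \ I).filter (fun i => flipC x i ∉ A)).card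

lemma flipC_flipC {n : ℕ} (x : Fin n → Bool) (i : Fin n) : flipC (flipC x i) i = x := by
  funext j
  by_cases h : j = i
  · subst h; simp [flipC]
  · simp [flipC, Function.update_of_ne h]

lemma agree_card_le {n : ℕ} (J : Finset (Fin n)) (B : Finset (Fin n → Bool))
    (h : ∀ x ∈ B, ∀ y ∈ B, ∀ i, i ∉ J → x i = y i) : B.card ≤ 2 ^ J.card := by
  classical
  have h1 : B.card ≤ (univ : Finset (↥J → Bool)).card := by
    apply Finset.card_le_card_of_injOn (fun x (i : ↥J) => x i.1)
    · intro x _; exact mem_univ _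
    · intro x hx y hy hxy
      funext i
      by_cases hi : i ∈ J
      · exact congrFun hxy ⟨i, hi⟩
      · exact h x hx y hy i hi
  rwa [Finset.card_univ, Fintype.card_fun, Fintype.card_bool, Fintype.card_coe] at h1

lemma cube_arith (a b d N T0 T1 : ℤ) (ha : 0 ≤ a) (hb : 0 ≤ b) (hd : 0 ≤ d)
    (haN : a ≤ N) (hbN : b ≤ N) (hca : a ≤ b + d) (hcb : b ≤ a + d)
    (h0 : 2 * a * (N - a) ≤ N * T0) (h1 : 2 * b * (N - b) ≤ N * T1) :
    2 * (a + b) * (N * 2 - (a + b)) ≤ N * 2 * (T0 + T1 + d) := by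
  rcases le_total a b with hab | hab
  · have k1 : (0:ℤ) ≤ (N - (b - a)) * (a + d - b) := by
      apply mul_nonneg <;> linarith
    have k2 : (0:ℤ) ≤ (b - a) * (a + d - b) := by
      apply mul_nonneg <;> linarith
    have k3 : (0:ℤ) ≤ (b - a) * (N - b) := by
      apply mul_nonneg <;> linarith
    have k4 : (0:ℤ) ≤ (b - a) * a := by
      apply mul_nonneg <;> linarith
    nlinarith [h0, h1, k1, k2, k3, k4]
  · have k1 : (0:ℤ) ≤ (N - (a - b)) * (b + d - a) := by
      apply mul_nonneg <;> linarith
    have k2 : (0:ℤ) ≤ (a - b) * (b + d - a) := by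
      apply mul_nonneg <;> linarith
    have k3 : (0:ℤ) ≤ (a - b) * (N - a) := by
      apply mul_nonneg <;> linarith
    have k4 : (0:ℤ) ≤ (a - b) * b := by
      apply mul_nonneg <;> linarith
    nlinarith [h0, h1, k1, k2, k3, k4]

lemma iso_bound {n : ℕ} (J : Finset (Fin n)) :
    ∀ B : Finset (Fin n → Bool), (∀ x ∈ B, ∀ y ∈ B, ∀ i, i ∉ J → x i = y i) →
    2 * B.card * (2 ^ J.card - B.card) ≤
      2 ^ J.card * ∑ x ∈ B, (J.filter (fun i => flipC x i ∉ B)).card := by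
  classical
  induction J using Finset.induction_on with
  | empty =>
      intro B h
      have hle : B.card ≤ 1 := by simpa using agree_card_le ∅ B h
      rcases Nat.le_one_iff_eq_zero_or_eq_one.mp hle with h' | h' <;> rw [h'] <;> simp
  | @insert j J' hj IH =>
      intro B h
      set B0 := B.filter (fun x => x j = false) with hB0
      set B1 := B.filter (fun x => x j = true) with hB1
      have hsplit : B0.card + B1.card = B.card := by
        have h2 := Finset.card_filter_add_card_filter_not (s := B)
          (p := fun x => x j = false)
        simpa [hB0, hB1] using h2
      have h0 : ∀ x ∈ B0, ∀ y ∈ B0, ∀ i, i ∉ J' → x i = y i := by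
        intro x hx y hy i hi
        by_cases hij : i = j
        · subst hij
          rw [(mem_filter.mp hx).2, (mem_filter.mp hy).2]
        · exact h x (mem_of_mem_filter x hx) y (mem_of_mem_filter y hy) i (by simp [hij, hi])
      have h1 : ∀ x ∈ B1, ∀ y ∈ B1, ∀ i, i ∉ J' → x i = y i := by
        intro x hx y hy i hi
        by_cases hij : i = j
        · subst hij
          rw [(mem_filter.mp hx).2, (mem_filter.mp hy).2]
        · exact h x (mem_of_mem_filter x hx) y (mem_of_mem_filter y hy) i (by simp [hij, hi])
      have key0 : ∀ x ∈ B0, ∀ i ∈ J', ((flipC x i ∉ B) ↔ (flipC x i ∉ B0)) := by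
        intro x hx i hi
        have hne : j ≠ i := fun e => hj (e ▸ hi)
        have hcoord : flipC x i j = false := by
          rw [flipC, Function.update_of_ne hne]
          exact (mem_filter.mp hx).2
        apply not_congr
        constructor
        · intro hb; exact mem_filter.mpr ⟨hb, hcoord⟩
        · exact fun hb => mem_of_mem_filter _ hb
      have key1 : ∀ x ∈ B1, ∀ i ∈ J', ((flipC x i ∉ B) ↔ (flipC x i ∉ B1)) := by
        intro x hx i hi
        have hne : j ≠ i := fun e => hj (e ▸ hi)
        have hcoord : flipC x i j = true := by
          rw [flipC, Function.update_of_ne hne]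
          exact (mem_filter.mp hx).2
        apply not_congr
        constructor
        · intro hb; exact mem_filter.mpr ⟨hb, hcoord⟩
        · exact fun hb => mem_of_mem_filter _ hb
      have hfcard : ∀ x, (((insert j J').filter (fun i => flipC x i ∉ B)).card
          = (J'.filter (fun i => flipC x i ∉ B)).card + (if flipC x j ∉ B then 1 else 0)) := by
        intro x
        by_cases hx : flipC x j ∉ B
        · rw [Finset.filter_insert, if_pos hx,
            Finset.card_insert_of_notMem (fun hmem => hj (mem_of_mem_filter _ hmem)), if_pos hx]
        · rw [Finset.filter_insert, if_neg hx, if_neg hx]; simp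
      have hsum : ∑ x ∈ B, ((insert j J').filter (fun i => flipC x i ∉ B)).card
          = (∑ x ∈ B, (J'.filter (fun i => flipC x i ∉ B)).card)
            + (B.filter (fun x => flipC x j ∉ B)).card := by
        rw [Finset.sum_congr rfl (fun x _ => hfcard x), Finset.sum_add_distrib]
        congr 1
        exact (Finset.card_filter _ _).symm
      have hB1' : B.filter (fun x => ¬ (x j = false)) = B1 := by
        rw [hB1]
        apply Finset.filter_congr
        intro x _
        simp
      have hsum2 : ∑ x ∈ B, (J'.filter (fun i => flipC x i ∉ B)).card
          = (∑ x ∈ B0, (J'.filter (fun i => flipC x i ∉ B0)).card)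
            + ∑ x ∈ B1, (J'.filter (fun i => flipC x i ∉ B1)).card := by
        rw [← Finset.sum_filter_add_sum_filter_not B (fun x => x j = false), hB1']
        congr 1
        · exact Finset.sum_congr rfl fun x hx =>
            congrArg Finset.card (Finset.filter_congr (fun i hi => key0 x hx i hi))
        · exact Finset.sum_congr rfl fun x hx =>
            congrArg Finset.card (Finset.filter_congr (fun i hi => key1 x hx i hi))
      set d := (B.filter (fun x => flipC x j ∉ B)).card with hd
      have claim_a : B0.card ≤ B1.card + d := by
        have hin_le : (B0.filter (fun x => flipC x j ∈ B)).card ≤ B1.card := by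
          apply Finset.card_le_card_of_injOn (fun x => flipC x j)
          · intro x hx
            have hxB := mem_filter.mp hx
            have hx0 := mem_filter.mp hxB.1
            refine mem_filter.mpr ⟨hxB.2, ?_⟩
            beta_reduce
            rw [flipC, Function.update_self, hx0.2]
            simp
          · intro x _ y _ hxy
            have h3 := congrArg (fun t => flipC t j) hxy
            simpa [flipC_flipC] using h3
        have hout_le : (B0.filter (fun x => flipC x j ∉ B)).card ≤ d :=
          Finset.card_le_card (Finset.filter_subset_filter _ (Finset.filter_subset _ _))
        have hsplit0 : (B0.filter (fun x => flipC x j ∈ B)).card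
            + (B0.filter (fun x => flipC x j ∉ B)).card = B0.card :=
          Finset.card_filter_add_card_filter_not (s := B0) (p := fun x => flipC x j ∈ B)
        omega
      have claim_b : B1.card ≤ B0.card + d := by
        have hin_le : (B1.filter (fun x => flipC x j ∈ B)).card ≤ B0.card := by
          apply Finset.card_le_card_of_injOn (fun x => flipC x j)
          · intro x hx
            have hxB := mem_filter.mp hx
            have hx0 := mem_filter.mp hxB.1
            refine mem_filter.mpr ⟨hxB.2, ?_⟩
            beta_reduce
            rw [flipC, Function.update_self, hx0.2]
            simp
          · intro x _ y _ hxy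
            have h3 := congrArg (fun t => flipC t j) hxy
            simpa [flipC_flipC] using h3
        have hout_le : (B1.filter (fun x => flipC x j ∉ B)).card ≤ d :=
          Finset.card_le_card (Finset.filter_subset_filter _ (Finset.filter_subset _ _))
        have hsplit1 : (B1.filter (fun x => flipC x j ∈ B)).card
            + (B1.filter (fun x => flipC x j ∉ B)).card = B1.card :=
          Finset.card_filter_add_card_filter_not (s := B1) (p := fun x => flipC x j ∈ B)
        omega
      have ha_le : B0.card ≤ 2 ^ J'.card := agree_card_le J' B0 h0
      have hb_le : B1.card ≤ 2 ^ J'.card := agree_card_le J' B1 h1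
      have IH0 := IH B0 h0
      have IH1 := IH B1 h1
      rw [Finset.card_insert_of_notMem hj, pow_succ, hsum, hsum2, ← hsplit]
      set N' := 2 ^ J'.card with hN'
      set a := B0.card
      set b := B1.card
      set T0 := ∑ x ∈ B0, (J'.filter (fun i => flipC x i ∉ B0)).card
      set T1 := ∑ x ∈ B1, (J'.filter (fun i => flipC x i ∉ B1)).card
      have hab2 : a + b ≤ N' * 2 := by omega
      have IH0' : 2 * (a:ℤ) * ((N':ℤ) - a) ≤ (N':ℤ) * T0 := by
        zify [ha_le] at IH0; exact IH0
      have IH1' : 2 * (b:ℤ) * ((N':ℤ) - b) ≤ (N':ℤ) * T1 := by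
        zify [hb_le] at IH1; exact IH1
      have halez : (a:ℤ) ≤ N' := by exact_mod_cast ha_le
      have hblez : (b:ℤ) ≤ N' := by exact_mod_cast hb_le
      have hca : (a:ℤ) ≤ (b:ℤ) + d := by exact_mod_cast claim_a
      have hcb : (b:ℤ) ≤ (a:ℤ) + d := by exact_mod_cast claim_b
      zify [hab2]
      exact cube_arith a b d (N':ℤ) T0 T1 (Int.natCast_nonneg a) (Int.natCast_nonneg b) (Int.natCast_nonneg d)
        halez hblez hca hcb IH0' IH1'

theorem cube_prop (k : ℕ) (hk : 1 ≤ k) :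
    ∃ K ε₀ : ℝ, 0 < K ∧ 0 < ε₀ ∧
      ∀ ε : ℝ, 0 < ε → ε ≤ ε₀ →
      ∀ n : ℕ, ∀ A : Finset (Fin n → Bool), ∀ I : Finset (Fin n),
        I.card = k →
        |(A.card : ℝ) - 2 ^ n / 2 ^ k| ≤ ε * (2 ^ n / 2 ^ k) →
        (nablaOutside A I : ℝ) ≤ ε * A.card →
        ∃ C : Finset (Fin n → Bool), IsSubcube k C ∧
          ((symmDiff A C).card : ℝ) ≤ K * ε * A.card := by
  classical
  refine ⟨2, 1/4, by norm_num, by norm_num, ?_⟩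
  intro ε hε hε4 n A I hIcard hAcard hnab
  have hkn : k ≤ n := by
    have h1 := Finset.card_le_univ I
    simpa [hIcard] using h1
  set J : Finset (Fin n) := univ \ I with hJ
  have hJcard : J.card = n - k := by
    rw [hJ, Finset.card_sdiff_of_subset (Finset.subset_univ I), Finset.card_univ, Fintype.card_fin, hIcard]
  set M : ℕ := 2 ^ (n - k) with hMdef
  have hMreal : (M : ℝ) = 2 ^ n / 2 ^ k := by
    rw [hMdef, eq_div_iff (by positivity)]
    push_cast
    rw [← pow_add]
    congr 1
    omega
  have hM1 : 1 ≤ M := Nat.one_le_two_pow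
  set Z := (univ : Finset (Fin n → Bool)).filter (fun z => ∀ i, i ∉ I → z i = false) with hZdef
  set B : (Fin n → Bool) → Finset (Fin n → Bool) :=
    fun z => A.filter (fun x => ∀ i ∈ I, x i = z i) with hBdef
  set patt : (Fin n → Bool) → (Fin n → Bool) :=
    fun x i => if i ∈ I then x i else false with hpattdef
  have hpattZ : ∀ x, patt x ∈ Z := by
    intro x
    simp only [hZdef, mem_filter, mem_univ, true_and]
    intro i hi
    simp [hpattdef, hi]
  have hfil : ∀ z ∈ Z, A.filter (fun x => patt x = z) = B z := by
    intro z hz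
    have hz' : ∀ i, i ∉ I → z i = false := by
      simpa [hZdef] using hz
    apply Finset.filter_congr
    intro x _
    constructor
    · intro hpz i hi
      rw [← congrFun hpz i]
      simp [hpattdef, hi]
    · intro hall
      funext i
      by_cases hi : i ∈ I
      · simp [hpattdef, hi, hall i hi]
      · simp [hpattdef, hi, hz' i hi]
  have hagree : ∀ z, ∀ x ∈ B z, ∀ y ∈ B z, ∀ i, i ∉ J → x i = y i := by
    intro z x hx y hy i hi
    have hiI : i ∈ I := by simpa [hJ] using hi
    rw [(mem_filter.mp hx).2 i hiI, (mem_filter.mp hy).2 i hiI]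
  have hBcard_le : ∀ z, (B z).card ≤ M := by
    intro z
    have h2 := agree_card_le J (B z) (hagree z)
    rwa [hJcard, ← hMdef] at h2
  have hflip : ∀ z, ∀ x ∈ B z, ∀ i ∈ J, ((flipC x i ∈ A) ↔ (flipC x i ∈ B z)) := by
    intro z x hx i hi
    have hiI : i ∉ I := (mem_sdiff.mp hi).2
    have hfib : ∀ t ∈ I, flipC x i t = z t := by
      intro t ht
      have hne : t ≠ i := fun e => hiI (e ▸ ht)
      rw [flipC, Function.update_of_ne hne]
      exact (mem_filter.mp hx).2 t ht
    constructor
    · intro hA'; exact mem_filter.mpr ⟨hA', hfib⟩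
    · exact fun hb => mem_of_mem_filter _ hb
  have hF1 : A.card = ∑ z ∈ Z, (B z).card := by
    rw [Finset.card_eq_sum_card_fiberwise (fun x _ => hpattZ x)]
    exact Finset.sum_congr rfl (fun z hz => by rw [hfil z hz])
  have hF2 : ∑ z ∈ Z, ∑ x ∈ B z, (J.filter (fun i => flipC x i ∉ B z)).card
      = nablaOutside A I := by
    rw [nablaOutside]
    rw [← Finset.sum_fiberwise_of_maps_to (g := patt) (fun x _ => hpattZ x)
      (fun x => ((univ \ I).filter (fun i => flipC x i ∉ A)).card)]
    apply Finset.sum_congr rfl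
    intro z hz
    rw [hfil z hz]
    apply Finset.sum_congr rfl
    intro x hx
    rw [← hJ]
    exact congrArg Finset.card
      (Finset.filter_congr (fun i hi => not_congr (hflip z x hx i hi))).symm
  have hmin : ∀ z, min (B z).card (M - (B z).card)
      ≤ ∑ x ∈ B z, (J.filter (fun i => flipC x i ∉ B z)).card := by
    intro z
    have hiso := iso_bound J (B z) (hagree z)
    rw [hJcard, ← hMdef] at hiso
    have hcM : (B z).card ≤ M := hBcard_le z
    set c := (B z).card with hc
    have h1 : M * min c (M - c) ≤ 2 * c * (M - c) := by
      rcases le_or_gt (2 * c) M with h2 | h2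
      · rw [min_eq_left (by omega)]
        have h3 : M ≤ 2 * (M - c) := by omega
        calc M * c = c * M := Nat.mul_comm _ _
          _ ≤ c * (2 * (M - c)) := Nat.mul_le_mul_left c h3
          _ = 2 * c * (M - c) := by ring
      · rw [min_eq_right (by omega)]
        exact Nat.mul_le_mul_right _ (by omega)
    have h4 := le_trans h1 hiso
    exact Nat.le_of_mul_le_mul_left h4 (by omega)
  have hsummin : ∑ z ∈ Z, min (B z).card (M - (B z).card) ≤ nablaOutside A I := by
    rw [← hF2]
    exact Finset.sum_le_sum (fun z _ => hmin z)
  have hMR : (1:ℝ) ≤ (M:ℝ) := by exact_mod_cast hM1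
  rw [← hMreal, abs_le] at hAcard
  obtain ⟨hAlo, hAhi⟩ := hAcard
  have hApos : 1 ≤ A.card := by
    by_contra h
    have h0 : A.card = 0 := by omega
    rw [h0] at hAlo
    push_cast at hAlo
    nlinarith
  set S := Z.filter (fun z => M < 2 * (B z).card) with hSdef
  have hS_ne : S.Nonempty := by
    rw [Finset.nonempty_iff_ne_empty]
    intro hS
    have hall : ∀ z ∈ Z, min (B z).card (M - (B z).card) = (B z).card := by
      intro z hz
      have hzS : z ∉ S := by rw [hS]; exact notMem_empty z
      have h2 : ¬ (M < 2 * (B z).card) := fun h3 => hzS (mem_filter.mpr ⟨hz, h3⟩)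
      have := hBcard_le z
      exact min_eq_left (by omega)
    have hle : A.card ≤ nablaOutside A I := by
      rw [hF1]
      calc ∑ z ∈ Z, (B z).card
          = ∑ z ∈ Z, min (B z).card (M - (B z).card) :=
            Finset.sum_congr rfl (fun z hz => (hall z hz).symm)
        _ ≤ nablaOutside A I := hsummin
    have hleR : (A.card:ℝ) ≤ ε * A.card := le_trans (by exact_mod_cast hle) hnab
    have h5 : (1:ℝ) ≤ (A.card:ℝ) := by exact_mod_cast hApos
    nlinarith
  have hS_le : S.card ≤ 1 := by
    by_contra h
    obtain ⟨z1, hz1, z2, hz2, hne⟩ := Finset.one_lt_card.mp (show 1 < S.card by omega)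
    have hz1Z : z1 ∈ Z := mem_of_mem_filter _ hz1
    have hz2Z : z2 ∈ Z := mem_of_mem_filter _ hz2
    have hpair : ({z1, z2} : Finset _) ⊆ Z := by
      intro t ht
      rcases mem_insert.mp ht with h' | h'
      · rw [h']; exact hz1Z
      · rw [mem_singleton.mp h']; exact hz2Z
    have hsum_a : (B z1).card + (B z2).card ≤ A.card := by
      rw [hF1]
      calc (B z1).card + (B z2).card
          = ∑ z ∈ ({z1, z2} : Finset _), (B z).card :=
            (Finset.sum_pair (f := fun z => (B z).card) hne).symm
        _ ≤ ∑ z ∈ Z, (B z).card := Finset.sum_le_sum_of_subset hpair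
    have hsum_m : min (B z1).card (M - (B z1).card) + min (B z2).card (M - (B z2).card)
        ≤ nablaOutside A I := by
      refine le_trans ?_ hsummin
      calc min (B z1).card (M - (B z1).card) + min (B z2).card (M - (B z2).card)
          = ∑ z ∈ ({z1, z2} : Finset _), min (B z).card (M - (B z).card) :=
            (Finset.sum_pair (f := fun z => min (B z).card (M - (B z).card)) hne).symm
        _ ≤ _ := Finset.sum_le_sum_of_subset hpair
    have hm1 : (B z1).card + min (B z1).card (M - (B z1).card) = M := by
      have h2 := (mem_filter.mp hz1).2
      have h3 := hBcard_le z1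
      rw [min_eq_right (by omega)]
      omega
    have hm2 : (B z2).card + min (B z2).card (M - (B z2).card) = M := by
      have h2 := (mem_filter.mp hz2).2
      have h3 := hBcard_le z2
      rw [min_eq_right (by omega)]
      omega
    have hcast : (2:ℝ) * M ≤ (A.card:ℝ) + (nablaOutside A I:ℝ) := by
      have h6 : 2 * M ≤ A.card + nablaOutside A I := by omega
      exact_mod_cast h6
    have hA0 : (0:ℝ) ≤ (A.card:ℝ) := Nat.cast_nonneg _
    nlinarith [hAhi, hnab, hMR, hε4, hε.le, hcast, hA0]
  have hScard : S.card = 1 := le_antisymm hS_le hS_ne.card_pos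
  obtain ⟨z₀, hz₀⟩ := Finset.card_eq_one.mp hScard
  have hz₀S : z₀ ∈ S := by rw [hz₀]; exact mem_singleton_self z₀
  have hz₀Z : z₀ ∈ Z := mem_of_mem_filter _ hz₀S
  have hz₀big : M < 2 * (B z₀).card := (mem_filter.mp hz₀S).2
  set C := (univ : Finset (Fin n → Bool)).filter (fun x => ∀ i ∈ I, x i = z₀ i) with hCdef
  refine ⟨C, ⟨I, z₀, hIcard, hCdef⟩, ?_⟩
  have hBz : B z₀ = A.filter (fun x => ∀ i ∈ I, x i = z₀ i) := rfl
  have hACi : A ∩ C = B z₀ := by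
    ext x
    rw [hBz]
    simp only [Finset.mem_inter, hCdef, Finset.mem_filter, Finset.mem_univ, true_and]
  have hAC : (A \ C).card + (B z₀).card = A.card := by
    rw [← hACi]
    exact Finset.card_sdiff_add_card_inter A C
  have hCA : (C \ A).card + (B z₀).card = C.card := by
    rw [← hACi, Finset.inter_comm]
    exact Finset.card_sdiff_add_card_inter C A
  have hCle : C.card ≤ M := by
    have h2 : ∀ x ∈ C, ∀ y ∈ C, ∀ i, i ∉ J → x i = y i := by
      intro x hx y hy i hi
      have hiI : i ∈ I := by simpa [hJ] using hi
      rw [(mem_filter.mp hx).2 i hiI, (mem_filter.mp hy).2 i hiI]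
    have h3 := agree_card_le J C h2
    rwa [hJcard, ← hMdef] at h3
  have hsd : (symmDiff A C).card ≤ ∑ z ∈ Z, min (B z).card (M - (B z).card) := by
    rw [symmDiff_def, Finset.sup_eq_union,
      Finset.card_union_of_disjoint disjoint_sdiff_sdiff]
    have hmz₀ : min (B z₀).card (M - (B z₀).card) = M - (B z₀).card :=
      min_eq_right (by have := hBcard_le z₀; omega)
    have h7 : (B z₀).card + ∑ z ∈ Z.erase z₀, (B z).card = ∑ z ∈ Z, (B z).card :=
      Finset.add_sum_erase Z (fun z => (B z).card) hz₀Z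
    have hrest : (A \ C).card = ∑ z ∈ Z.erase z₀, min (B z).card (M - (B z).card) := by
      have h5 : (A \ C).card = ∑ z ∈ Z.erase z₀, (B z).card := by omega
      rw [h5]
      apply Finset.sum_congr rfl
      intro z hz
      have hzZ : z ∈ Z := mem_of_mem_erase hz
      have hzne : z ≠ z₀ := (mem_erase.mp hz).1
      have hzS : z ∉ S := by rw [hz₀]; simpa using hzne
      have h8 : ¬ (M < 2 * (B z).card) := fun h9 => hzS (mem_filter.mpr ⟨hzZ, h9⟩)
      have := hBcard_le z
      exact (min_eq_left (by omega)).symm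
    have htotal : min (B z₀).card (M - (B z₀).card)
        + ∑ z ∈ Z.erase z₀, min (B z).card (M - (B z).card)
        = ∑ z ∈ Z, min (B z).card (M - (B z).card) :=
      Finset.add_sum_erase Z (fun z => min (B z).card (M - (B z).card)) hz₀Z
    omega
  have hfinal : ((symmDiff A C).card : ℝ) ≤ ε * A.card := by
    have h10 : (symmDiff A C).card ≤ nablaOutside A I := le_trans hsd hsummin
    exact le_trans (by exact_mod_cast h10) hnab
  have hA0 : (0:ℝ) ≤ (A.card:ℝ) := Nat.cast_nonneg _
  nlinarith [hfinal, hε.le, hA0]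
end
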